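/- arXiv:2509.25579 — 7 statements merged into one kernel-verified Lean document; each statement's English description precedes it below -/
import Mathlib

section
/- Let k₁, k₂, k₃ > 0 and q = √(k₁/k₃). The function V(ρ, δ, γ) = ρ² + (δ + (k₁/(2k₂))·Si(2γ))² + q²γ² on {ρ ≥ 0} × ℝ × ℝ is positive definite and radially unbounded with respect to the norm |(ρ,δ,γ)| = ρ + |δ| + |γ|: there exist class-K∞ functions α₁, α₂ such that α₁(ρ + |δ| + |γ|) ≤ V(ρ,δ,γ) ≤ α₂(ρ + |δ| + |γ|) for all ρ ≥ 0, δ, γ ∈ ℝ. -/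
open Real Set

noncomputable def sinc (x : ℝ) : ℝ := if x = 0 then 1 else Real.sin x / x

noncomputable def Si (a : ℝ) : ℝ := ∫ x in (0 : ℝ)..a, _root_.sinc x

def IsClassKInf (f : ℝ → ℝ) : Prop :=
  ContinuousOn f (Ici 0) ∧ StrictMonoOn f (Ici 0) ∧ f 0 = 0 ∧
    Filter.Tendsto f Filter.atTop Filter.atTop

lemma abs_sinc_le_one (x : ℝ) : |_root_.sinc x| ≤ 1 := by
  unfold _root_.sinc
  split_ifs with h
  · simp
  · rw [abs_div]
    rw [div_le_one (abs_pos.mpr h)]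
    exact Real.abs_sin_le_abs
  
lemma abs_Si_le (a : ℝ) : |Si a| ≤ |a| := by
  have := intervalIntegral.norm_integral_le_of_norm_le_const
    (f := _root_.sinc) (a := (0:ℝ)) (b := a) (C := 1) (fun x _ => _root_.abs_sinc_le_one x)
  simpa [Si] using this

lemma classK_sq (a : ℝ) (ha : 0 < a) : IsClassKInf (fun x => a * x ^ 2) := by
  refine ⟨(continuous_const.mul (continuous_pow 2)).continuousOn, ?_, by simp, ?_⟩
  · intro x hx y hy hxy
    have hx0 : (0:ℝ) ≤ x := hx
    have h2 : x ^ 2 < y ^ 2 := by nlinarith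
    exact mul_lt_mul_of_pos_left h2 ha
  · exact (Filter.tendsto_pow_atTop (two_ne_zero)).const_mul_atTop ha

set_option maxHeartbeats 1000000 in
theorem GloFo_CLF_sandwich (k₁ k₂ k₃ : ℝ) (hk₁ : 0 < k₁) (hk₂ : 0 < k₂) (hk₃ : 0 < k₃) :
    ∃ α₁ α₂ : ℝ → ℝ, IsClassKInf α₁ ∧ IsClassKInf α₂ ∧
      ∀ ρ δ γ : ℝ, 0 ≤ ρ →
        α₁ (ρ + |δ| + |γ|) ≤
          ρ ^ 2 + (δ + (k₁ / (2 * k₂)) * Si (2 * γ)) ^ 2 + (Real.sqrt (k₁ / k₃)) ^ 2 * γ ^ 2 ∧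
        ρ ^ 2 + (δ + (k₁ / (2 * k₂)) * Si (2 * γ)) ^ 2 + (Real.sqrt (k₁ / k₃)) ^ 2 * γ ^ 2 ≤
          α₂ (ρ + |δ| + |γ|) := by
  set c := k₁ / (2 * k₂) with hc
  have hc0 : 0 < c := div_pos hk₁ (by linarith)
  set Q := k₁ / k₃ with hQdef
  have hQ : 0 < Q := div_pos hk₁ hk₃
  have hsq : Real.sqrt Q ^ 2 = Q := Real.sq_sqrt hQ.le
  set m := min 1 Q with hm
  have hm0 : 0 < m := lt_min one_pos hQ
  have hm1 : m ≤ 1 := min_le_left _ _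
  have hmQ : m ≤ Q := min_le_right _ _
  have hden : (0:ℝ) < 3 * (1 + 2 * c) ^ 2 := by positivity
  clear_value c Q m
  refine ⟨fun x => m / (3 * (1 + 2 * c) ^ 2) * x ^ 2,
    fun x => (1 + (1 + 2 * c) ^ 2 + Q) * x ^ 2,
    classK_sq _ (div_pos hm0 hden), classK_sq _ (by positivity), ?_⟩
  intro ρ δ γ hρ
  rw [hsq]
  have hSi : |Si (2 * γ)| ≤ 2 * |γ| := by
    have := abs_Si_le (2 * γ)
    rwa [abs_mul, abs_two] at this
  have hSi1 : Si (2 * γ) ≤ 2 * |γ| := (abs_le.mp hSi).2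
  have hSi2 : -(2 * |γ|) ≤ Si (2 * γ) := (abs_le.mp hSi).1
  have hd1 : δ ≤ |δ| := le_abs_self δ
  have hd2 : -|δ| ≤ δ := neg_abs_le δ
  have hg1 : γ ≤ |γ| := le_abs_self γ
  have hg2 : -|γ| ≤ γ := neg_abs_le γ
  have hg0 : (0:ℝ) ≤ |γ| := abs_nonneg γ
  have hd0 : (0:ℝ) ≤ |δ| := abs_nonneg δ
  have hgsq : γ ^ 2 = |γ| ^ 2 := (sq_abs γ).symm
  constructor
  · -- lower bound
    show m / (3 * (1 + 2 * c) ^ 2) * (ρ + |δ| + |γ|) ^ 2 ≤ _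
    rw [div_mul_eq_mul_div m _ _, div_le_iff₀ hden]
    set A := δ + c * Si (2 * γ) with hA
    clear_value A
    have hAabs : |δ| ≤ |A| + 2 * c * |γ| := by
      have : |δ| ≤ |A| + |c * Si (2 * γ)| := by
        have := abs_sub_abs_le_abs_sub δ (-(c * Si (2 * γ)))
        simp only [sub_neg_eq_add, abs_neg] at this
        rw [← hA] at this
        linarith
      have h2 : |c * Si (2 * γ)| ≤ 2 * c * |γ| := by
        rw [abs_mul, abs_of_pos hc0]
        nlinarith
      linarith
    have key : (ρ + |δ| + |γ|) ^ 2 ≤ 3 * (ρ ^ 2 + A ^ 2 + (1 + 2 * c) ^ 2 * |γ| ^ 2) := by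
      have hs : ρ + |δ| + |γ| ≤ ρ + |A| + (1 + 2 * c) * |γ| := by linarith
      have hs0 : 0 ≤ ρ + |δ| + |γ| := by positivity
      have hB : (ρ + |δ| + |γ|) ^ 2 ≤ (ρ + |A| + (1 + 2 * c) * |γ|) ^ 2 := by
        have hB0 : 0 ≤ ρ + |A| + (1 + 2 * c) * |γ| := by linarith
        nlinarith
      have hA0 : 0 ≤ |A| := abs_nonneg A
      have hAsq : |A| ^ 2 = A ^ 2 := sq_abs A
      nlinarith [sq_nonneg (ρ - |A|), sq_nonneg (ρ - (1 + 2 * c) * |γ|),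
        sq_nonneg (|A| - (1 + 2 * c) * |γ|)]
    rw [hgsq]
    have hE1 : (1:ℝ) ≤ (1 + 2 * c) ^ 2 := by nlinarith
    have t1 : 0 ≤ ((1 + 2 * c) ^ 2 - m) * (ρ ^ 2 + A ^ 2) := by
      have : 0 ≤ (1 + 2 * c) ^ 2 - m := by linarith
      positivity
    have t2 : 0 ≤ 3 * (1 + 2 * c) ^ 2 * ((Q - m) * |γ| ^ 2) := by
      have : 0 ≤ Q - m := by linarith
      positivity
    have t3 := mul_le_mul_of_nonneg_left key hm0.le
    have t4 : 0 ≤ (1 - m) * ((1 + 2 * c) ^ 2 * |γ| ^ 2) := by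
      have : 0 ≤ 1 - m := by linarith
      positivity
    nlinarith [t1, t2, t3, t4]
  · -- upper bound
    have h1 : (δ + c * Si (2 * γ)) ^ 2 ≤ ((1 + 2 * c) * (ρ + |δ| + |γ|)) ^ 2 := by
      have habs : |δ + c * Si (2 * γ)| ≤ (1 + 2 * c) * (ρ + |δ| + |γ|) := by
        calc |δ + c * Si (2 * γ)| ≤ |δ| + |c * Si (2 * γ)| := abs_add_le _ _
        _ ≤ |δ| + 2 * c * |γ| := by
            rw [abs_mul, abs_of_pos hc0]; nlinarith
        _ ≤ (1 + 2 * c) * (ρ + |δ| + |γ|) := by nlinarith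
      nlinarith [abs_nonneg (δ + c * Si (2 * γ)), sq_abs (δ + c * Si (2 * γ))]
    rw [hgsq]
    show _ ≤ (1 + (1 + 2 * c) ^ 2 + Q) * (ρ + |δ| + |γ|) ^ 2
    have hρ2 : ρ ^ 2 ≤ (ρ + |δ| + |γ|) ^ 2 := by nlinarith
    have hγ2 : |γ| ^ 2 ≤ (ρ + |δ| + |γ|) ^ 2 := by nlinarith
    have hγ3 := mul_le_mul_of_nonneg_left hγ2 hQ.le
    have h1' : (δ + c * Si (2 * γ)) ^ 2 ≤ (1 + 2 * c) ^ 2 * (ρ + |δ| + |γ|) ^ 2 := by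
      rw [mul_pow] at h1; exact h1
    linarith
end

section
/- Let k₁, k₂, k₃ > 0, q = √(k₁/k₃). The function V(ρ, δ, γ) = ρ² + (δ + (k₁/k₂)·sin γ)² + 4q²·tan²(γ/2) on {ρ ≥ 0} × ℝ × (−π, π) is positive definite and radially unbounded with respect to the metric |(ρ,δ,γ)| = ρ + |δ| + 2·tan(|γ|/2): there exist class-K∞ functions α₁, α₂ with α₁(|(ρ,δ,γ)|) ≤ V(ρ,δ,γ) ≤ α₂(|(ρ,δ,γ)|). -/
open Real Set

lemma classK_quad {a : ℝ} (ha : 0 < a) : IsClassKInf (fun x => a * x ^ 2) := by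
  refine ⟨(continuous_const.mul (continuous_pow 2)).continuousOn, ?_, by simp, ?_⟩
  · intro x hx y _ hxy
    have hx' : (0:ℝ) ≤ x := hx
    exact mul_lt_mul_of_pos_left (by nlinarith) ha
  · exact (Filter.tendsto_pow_atTop two_ne_zero).const_mul_atTop ha

lemma key_lower (c q2 m ρ D T u : ℝ) (hc0 : 0 < c) (hq2 : 0 < q2)
    (hρ : 0 ≤ ρ) (hD0 : 0 ≤ D) (hT0 : 0 ≤ T) (hu0 : 0 ≤ u)
    (hDu : D ≤ u + 2 * c * T) (hm0 : 0 ≤ m) (hm1 : m ≤ 1)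
    (hm2 : m * (1 + c) ^ 2 ≤ q2) :
    m / 3 * (ρ + D + 2 * T) ^ 2 ≤ ρ ^ 2 + u ^ 2 + 4 * q2 * T ^ 2 := by
  have hs : ρ + D + 2 * T ≤ ρ + u + 2 * (1 + c) * T := by nlinarith
  have hs0 : 0 ≤ ρ + D + 2 * T := by positivity
  have hA : (ρ + D + 2 * T) ^ 2 ≤ (ρ + u + 2 * (1 + c) * T) ^ 2 :=
    pow_le_pow_left₀ hs0 hs 2
  have hB : (ρ + u + 2 * (1 + c) * T) ^ 2 ≤
      3 * (ρ ^ 2 + u ^ 2 + 4 * (1 + c) ^ 2 * T ^ 2) := by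
    nlinarith [sq_nonneg (ρ - u), sq_nonneg (ρ - 2 * (1 + c) * T),
      sq_nonneg (u - 2 * (1 + c) * T)]
  have hCm : m / 3 * (ρ + D + 2 * T) ^ 2 ≤
      m / 3 * (3 * (ρ ^ 2 + u ^ 2 + 4 * (1 + c) ^ 2 * T ^ 2)) :=
    mul_le_mul_of_nonneg_left (hA.trans hB) (by positivity)
  have e1 := mul_le_mul_of_nonneg_right hm1 (sq_nonneg ρ)
  have e2 := mul_le_mul_of_nonneg_right hm1 (sq_nonneg u)
  have e3 := mul_le_mul_of_nonneg_right hm2 (sq_nonneg T)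
  nlinarith [e1, e2, e3, hCm]

lemma key_upper (c q2 ρ D T u : ℝ) (hc0 : 0 < c) (hq2 : 0 < q2)
    (hρ : 0 ≤ ρ) (hD0 : 0 ≤ D) (hT0 : 0 ≤ T) (hu0 : 0 ≤ u)
    (huD : u ≤ D + 2 * c * T) :
    ρ ^ 2 + u ^ 2 + 4 * q2 * T ^ 2 ≤ (1 + (1 + c) ^ 2 + q2) * (ρ + D + 2 * T) ^ 2 := by
  have hub : u ≤ (1 + c) * (ρ + D + 2 * T) := by nlinarith
  have hs0 : 0 ≤ ρ + D + 2 * T := by positivity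
  have e1 : ρ ^ 2 ≤ (ρ + D + 2 * T) ^ 2 := pow_le_pow_left₀ hρ (by linarith) 2
  have e2 : u ^ 2 ≤ ((1 + c) * (ρ + D + 2 * T)) ^ 2 := pow_le_pow_left₀ hu0 hub 2
  have e3 : (2 * T) ^ 2 ≤ (ρ + D + 2 * T) ^ 2 :=
    pow_le_pow_left₀ (by linarith) (by linarith) 2
  have e4 := mul_le_mul_of_nonneg_left e3 hq2.le
  nlinarith [e1, e2, e4, sq_nonneg (ρ + D + 2 * T)]

theorem BoFo_CLF_sandwich (k₁ k₂ k₃ : ℝ) (hk₁ : 0 < k₁) (hk₂ : 0 < k₂) (hk₃ : 0 < k₃) :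
    ∃ α₁ α₂ : ℝ → ℝ, IsClassKInf α₁ ∧ IsClassKInf α₂ ∧
      ∀ ρ δ γ : ℝ, 0 ≤ ρ → γ ∈ Ioo (-Real.pi) Real.pi →
        α₁ (ρ + |δ| + 2 * Real.tan (|γ| / 2)) ≤
          ρ ^ 2 + (δ + (k₁ / k₂) * Real.sin γ) ^ 2 +
            4 * (Real.sqrt (k₁ / k₃)) ^ 2 * Real.tan (γ / 2) ^ 2 ∧
        ρ ^ 2 + (δ + (k₁ / k₂) * Real.sin γ) ^ 2 +
            4 * (Real.sqrt (k₁ / k₃)) ^ 2 * Real.tan (γ / 2) ^ 2 ≤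
          α₂ (ρ + |δ| + 2 * Real.tan (|γ| / 2)) := by
  have hc0 : 0 < k₁ / k₂ := div_pos hk₁ hk₂
  have hq2 : 0 < k₁ / k₃ := div_pos hk₁ hk₃
  have hsq : (Real.sqrt (k₁ / k₃)) ^ 2 = k₁ / k₃ := Real.sq_sqrt hq2.le
  have hm0 : 0 < min 1 ((k₁ / k₃) / (1 + k₁ / k₂) ^ 2) :=
    lt_min one_pos (div_pos hq2 (by positivity))
  have hm1 : min 1 ((k₁ / k₃) / (1 + k₁ / k₂) ^ 2) ≤ 1 := min_le_left _ _
  have hm2 : min 1 ((k₁ / k₃) / (1 + k₁ / k₂) ^ 2) * (1 + k₁ / k₂) ^ 2 ≤ k₁ / k₃ := by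
    have h := min_le_right 1 ((k₁ / k₃) / (1 + k₁ / k₂) ^ 2)
    have hpos : (0:ℝ) < (1 + k₁ / k₂) ^ 2 := by positivity
    calc min 1 ((k₁ / k₃) / (1 + k₁ / k₂) ^ 2) * (1 + k₁ / k₂) ^ 2
        ≤ (k₁ / k₃) / (1 + k₁ / k₂) ^ 2 * (1 + k₁ / k₂) ^ 2 :=
          mul_le_mul_of_nonneg_right h hpos.le
      _ = k₁ / k₃ := by field_simp
  have hε : 0 < min 1 ((k₁ / k₃) / (1 + k₁ / k₂) ^ 2) / 3 := by positivity
  have hC : 0 < 1 + (1 + k₁ / k₂) ^ 2 + k₁ / k₃ := by positivity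
  refine ⟨fun x => (min 1 ((k₁ / k₃) / (1 + k₁ / k₂) ^ 2) / 3) * x ^ 2,
    fun x => (1 + (1 + k₁ / k₂) ^ 2 + k₁ / k₃) * x ^ 2, classK_quad hε, classK_quad hC, ?_⟩
  intro ρ δ γ hρ hγ
  have hπ := Real.pi_pos
  have hγ2 : γ / 2 ∈ Ioo (-(Real.pi / 2)) (Real.pi / 2) :=
    ⟨by linarith [hγ.1], by linarith [hγ.2]⟩
  have hcos : 0 < Real.cos (γ / 2) := Real.cos_pos_of_mem_Ioo hγ2
  have hcos1 : Real.cos (γ / 2) ≤ 1 := Real.cos_le_one _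
  have habs : Real.tan (|γ| / 2) = |Real.tan (γ / 2)| := by
    rcases abs_cases γ with ⟨h1, h2⟩ | ⟨h1, h2⟩
    · rw [h1, abs_of_nonneg]
      exact Real.tan_nonneg_of_nonneg_of_le_pi_div_two (by linarith) (by linarith [hγ.2])
    · rw [h1, show -γ / 2 = -(γ / 2) by ring, Real.tan_neg, abs_of_nonpos]
      have : 0 ≤ Real.tan (-(γ / 2)) :=
        Real.tan_nonneg_of_nonneg_of_le_pi_div_two (by linarith) (by linarith [hγ.1])
      rw [Real.tan_neg] at this; linarith
  have hsin2 : Real.sin γ = 2 * Real.sin (γ / 2) * Real.cos (γ / 2) := by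
    rw [← Real.sin_two_mul]; ring_nf
  have htan : Real.tan (γ / 2) = Real.sin (γ / 2) / Real.cos (γ / 2) :=
    Real.tan_eq_sin_div_cos _
  have hsinle : |Real.sin γ| ≤ 2 * |Real.tan (γ / 2)| := by
    have e1 : |Real.sin γ| = 2 * |Real.sin (γ / 2)| * Real.cos (γ / 2) := by
      rw [hsin2, abs_mul, abs_mul, abs_two, abs_of_pos hcos]
    have e2 : |Real.tan (γ / 2)| = |Real.sin (γ / 2)| / Real.cos (γ / 2) := by
      rw [htan, abs_div, abs_of_pos hcos]
    have h3 : |Real.sin (γ / 2)| * Real.cos (γ / 2) ≤ |Real.sin (γ / 2)| := by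
      nlinarith [abs_nonneg (Real.sin (γ / 2))]
    have h4 : |Real.sin (γ / 2)| ≤ |Real.sin (γ / 2)| / Real.cos (γ / 2) :=
      (le_div_iff₀ hcos).mpr h3
    rw [e1, e2]; linarith
  rw [habs, hsq]
  have huD : |δ + (k₁ / k₂) * Real.sin γ| ≤ |δ| + 2 * (k₁ / k₂) * |Real.tan (γ / 2)| := by
    calc |δ + (k₁ / k₂) * Real.sin γ| ≤ |δ| + |(k₁ / k₂) * Real.sin γ| := abs_add_le _ _
      _ = |δ| + (k₁ / k₂) * |Real.sin γ| := by rw [abs_mul, abs_of_pos hc0]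
      _ ≤ |δ| + 2 * (k₁ / k₂) * |Real.tan (γ / 2)| := by nlinarith
  have hDu : |δ| ≤ |δ + (k₁ / k₂) * Real.sin γ| + 2 * (k₁ / k₂) * |Real.tan (γ / 2)| := by
    have e : δ = (δ + (k₁ / k₂) * Real.sin γ) - (k₁ / k₂) * Real.sin γ := by ring
    calc |δ| = |(δ + (k₁ / k₂) * Real.sin γ) - (k₁ / k₂) * Real.sin γ| := by rw [← e]
      _ ≤ |δ + (k₁ / k₂) * Real.sin γ| + |(k₁ / k₂) * Real.sin γ| := abs_sub _ _
      _ = |δ + (k₁ / k₂) * Real.sin γ| + (k₁ / k₂) * |Real.sin γ| := by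
          rw [abs_mul, abs_of_pos hc0]
      _ ≤ |δ + (k₁ / k₂) * Real.sin γ| + 2 * (k₁ / k₂) * |Real.tan (γ / 2)| := by nlinarith
  have hu2 : (δ + (k₁ / k₂) * Real.sin γ) ^ 2 = |δ + (k₁ / k₂) * Real.sin γ| ^ 2 :=
    (sq_abs _).symm
  have ht2 : Real.tan (γ / 2) ^ 2 = |Real.tan (γ / 2)| ^ 2 := (sq_abs _).symm
  rw [hu2, ht2]
  constructor
  · exact key_lower (k₁ / k₂) (k₁ / k₃) _ ρ |δ| |Real.tan (γ / 2)|
      |δ + (k₁ / k₂) * Real.sin γ| hc0 hq2 hρ (abs_nonneg _) (abs_nonneg _)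
      (abs_nonneg _) hDu hm0.le hm1 hm2
  · exact key_upper (k₁ / k₂) (k₁ / k₃) ρ |δ| |Real.tan (γ / 2)|
      |δ + (k₁ / k₂) * Real.sin γ| hc0 hq2 hρ (abs_nonneg _) (abs_nonneg _)
      (abs_nonneg _) huD
end

section
/- Let k₁, k₂, k₃ > 0 and consider the planar system ζ̇ = −(k₁k₃/k₂)·sinc²(2γ)·ζ, γ̇ = −k₂γ − k₃·sinc(2γ)·ζ. The function W(ζ, γ) = ζ² + (k₁/k₃)·γ² satisfies Ẇ = −(k₁k₂/k₃)·[((k₃/k₂)·sinc(2γ)·ζ)² + γ² + ((k₃/k₂)·sinc(2γ)·ζ + γ)²] along solutions, and this expression is strictly negative for all (ζ, γ) ≠ (0, 0). -/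
open Real Set

theorem GloFo_Lyapunov_derivative (k₁ k₂ k₃ : ℝ) (hk₁ : 0 < k₁) (hk₂ : 0 < k₂) (hk₃ : 0 < k₃)
    (ζ γ : ℝ → ℝ)
    (hζ : ∀ t : ℝ, HasDerivAt ζ (-(k₁ * k₃ / k₂) * _root_.sinc (2 * γ t) ^ 2 * ζ t) t)
    (hγ : ∀ t : ℝ, HasDerivAt γ (-k₂ * γ t - k₃ * _root_.sinc (2 * γ t) * ζ t) t) :
    (∀ t : ℝ, HasDerivAt (fun s => ζ s ^ 2 + (k₁ / k₃) * γ s ^ 2)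
      (-(k₁ * k₂ / k₃) * (((k₃ / k₂) * _root_.sinc (2 * γ t) * ζ t) ^ 2 + γ t ^ 2 +
        ((k₃ / k₂) * _root_.sinc (2 * γ t) * ζ t + γ t) ^ 2)) t) ∧
    (∀ z g : ℝ, (z, g) ≠ ((0 : ℝ), (0 : ℝ)) →
      -(k₁ * k₂ / k₃) * (((k₃ / k₂) * _root_.sinc (2 * g) * z) ^ 2 + g ^ 2 +
        ((k₃ / k₂) * _root_.sinc (2 * g) * z + g) ^ 2) < 0) := by
  constructor
  · intro t
    have h := ((hζ t).pow 2).add (((hγ t).pow 2).const_mul (k₁ / k₃))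
    refine h.congr_deriv ?_
    field_simp [hk₂.ne', hk₃.ne']
    ring
  · intro z g hzg
    have hk : 0 < k₁ * k₂ / k₃ := by positivity
    rw [neg_mul, neg_lt_zero]
    apply mul_pos hk
    by_cases hg : g = 0
    · have hz : z ≠ 0 := by
        intro hz; exact hzg (by simp [hz, hg])
      have : _root_.sinc (2 * g) = 1 := by simp [_root_.sinc, hg]
      rw [this, hg]
      have : 0 < (k₃ / k₂ * 1 * z) ^ 2 := by positivity
      nlinarith [sq_nonneg (k₃ / k₂ * 1 * z + 0)]
    · have h1 : 0 < g ^ 2 := by positivity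
      nlinarith [sq_nonneg (k₃ / k₂ * _root_.sinc (2 * g) * z), sq_nonneg (k₃ / k₂ * _root_.sinc (2 * g) * z + g)]
end

section
/- Let k₂, k₃ > 0 and consider the planar system ζ̇ = −(k₁k₃/k₂)·(cos²γ/(1+tan²(γ/2))²)·ζ, γ̇ = −k₂·sin γ − k₃·(cos γ/(1+tan²(γ/2))²)·ζ on ℝ × (−π, π), with k₁ > 0. The function W(ζ, γ) = ζ² + 4(k₁/k₃)·tan²(γ/2) satisfies along solutions Ẇ = −(k₁k₂/k₃)·[((k₃/k₂)·(cos γ/(1+tan²(γ/2)))·ζ)² + 4·tan²(γ/2) + ((k₃/k₂)·(cos γ/(1+tan²(γ/2)))·ζ + 2·tan(γ/2))²], which is strictly negative for all (ζ, γ) ≠ (0, 0) with |γ| < π. -/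
open Real Set

theorem BoFo_Lyapunov_derivative (k₁ k₂ k₃ : ℝ) (hk₁ : 0 < k₁) (hk₂ : 0 < k₂) (hk₃ : 0 < k₃)
    (ζ γ : ℝ → ℝ)
    (hγ_range : ∀ t : ℝ, γ t ∈ Ioo (-Real.pi) Real.pi)
    (hζ : ∀ t : ℝ, HasDerivAt ζ
      (-(k₁ * k₃ / k₂) * (Real.cos (γ t) ^ 2 / (1 + Real.tan (γ t / 2) ^ 2) ^ 2) * ζ t) t)
    (hγ : ∀ t : ℝ, HasDerivAt γ
      (-k₂ * Real.sin (γ t) -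
        k₃ * (Real.cos (γ t) / (1 + Real.tan (γ t / 2) ^ 2) ^ 2) * ζ t) t) :
    (∀ t : ℝ, HasDerivAt (fun s => ζ s ^ 2 + 4 * (k₁ / k₃) * Real.tan (γ s / 2) ^ 2)
      (-(k₁ * k₂ / k₃) *
        (((k₃ / k₂) * (Real.cos (γ t) / (1 + Real.tan (γ t / 2) ^ 2)) * ζ t) ^ 2 +
          4 * Real.tan (γ t / 2) ^ 2 +
          ((k₃ / k₂) * (Real.cos (γ t) / (1 + Real.tan (γ t / 2) ^ 2)) * ζ t +
            2 * Real.tan (γ t / 2)) ^ 2)) t) ∧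
    (∀ z g : ℝ, |g| < Real.pi → (z, g) ≠ ((0 : ℝ), (0 : ℝ)) →
      -(k₁ * k₂ / k₃) *
        (((k₃ / k₂) * (Real.cos g / (1 + Real.tan (g / 2) ^ 2)) * z) ^ 2 +
          4 * Real.tan (g / 2) ^ 2 +
          ((k₃ / k₂) * (Real.cos g / (1 + Real.tan (g / 2) ^ 2)) * z +
            2 * Real.tan (g / 2)) ^ 2) < 0) := by
  constructor
  · intro t
    have hmem := hγ_range t
    have hhalf : γ t / 2 ∈ Ioo (-(Real.pi/2)) (Real.pi/2) := by
      constructor <;> [linarith [hmem.1]; linarith [hmem.2]]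
    have hc : Real.cos (γ t / 2) ≠ 0 :=
      ne_of_gt (Real.cos_pos_of_mem_Ioo hhalf)
    have htan : HasDerivAt (fun s => Real.tan (γ s / 2))
        ((1 / Real.cos (γ t / 2) ^ 2) * ((-k₂ * Real.sin (γ t) -
          k₃ * (Real.cos (γ t) / (1 + Real.tan (γ t / 2) ^ 2) ^ 2) * ζ t) / 2)) t :=
      by have := (Real.hasDerivAt_tan hc).comp t ((hγ t).div_const 2); exact this
    have hW : HasDerivAt (fun s => ζ s ^ 2 + 4 * (k₁ / k₃) * Real.tan (γ s / 2) ^ 2)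
        (2 * ζ t ^ 1 * (-(k₁ * k₃ / k₂) * (Real.cos (γ t) ^ 2 / (1 + Real.tan (γ t / 2) ^ 2) ^ 2) * ζ t)
          + 4 * (k₁ / k₃) * (2 * Real.tan (γ t / 2) ^ 1 *
            ((1 / Real.cos (γ t / 2) ^ 2) * ((-k₂ * Real.sin (γ t) -
              k₃ * (Real.cos (γ t) / (1 + Real.tan (γ t / 2) ^ 2) ^ 2) * ζ t) / 2)))) t :=
      ((hζ t).pow 2).add ((htan.pow 2).const_mul (4 * (k₁ / k₃)))
    convert hW using 1
    set T := Real.tan (γ t / 2) with hT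
    have hc2 : Real.cos (γ t / 2) ^ 2 * (1 + T ^ 2) = 1 := by
      have h1 : Real.cos (γ t / 2) ^ 2 * (1 + T ^ 2)
          = Real.cos (γ t / 2) ^ 2 + Real.sin (γ t / 2) ^ 2 := by
        rw [hT, Real.tan_eq_sin_div_cos]
        field_simp
      rw [h1, add_comm, Real.sin_sq_add_cos_sq]
    have hsin : Real.sin (γ t) = 2 * T * Real.cos (γ t / 2) ^ 2 := by
      have h2 : γ t = 2 * (γ t / 2) := by ring
      rw [h2, Real.sin_two_mul, hT, Real.tan_eq_sin_div_cos]
      field_simp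
    have hne : (1 + T ^ 2) ≠ 0 := by positivity
    have hcpos : (0:ℝ) < 1 + T ^ 2 := by positivity
    have hcos2 : Real.cos (γ t / 2) ^ 2 = 1 / (1 + T ^ 2) := by
      field_simp
      linarith [hc2]
    rw [hsin, hcos2]
    field_simp
    ring
  · intro z g hg hne
    have hk : 0 < k₁ * k₂ / k₃ := by positivity
    set T := Real.tan (g / 2) with hT
    set A := (k₃ / k₂) * (Real.cos g / (1 + T ^ 2)) * z with hA
    have hpos : 0 < A ^ 2 + 4 * T ^ 2 + (A + 2 * T) ^ 2 := by
      rcases eq_or_ne T 0 with hT0 | hT0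
      · -- then g = 0 since tan(g/2)=0 and |g/2|<π/2
        have habs := abs_lt.mp hg
        have hhalf : g / 2 ∈ Ioo (-(Real.pi/2)) (Real.pi/2) := by
          constructor <;> [linarith [habs.1]; linarith [habs.2]]
        have hg0 : g = 0 := by
          have hinj : g / 2 = 0 := Real.injOn_tan hhalf
            ⟨by linarith [Real.pi_pos], by linarith [Real.pi_pos]⟩
            (by simpa [Real.tan_zero] using hT0)
          linarith
        have hz : z ≠ 0 := by
          intro h; exact hne (by simp [h, hg0])
        have hcos : Real.cos g = 1 := by rw [hg0]; simp
        have hAe : A = k₃ / k₂ * z := by rw [hA, hcos, hT0]; norm_num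
        have hA0 : A ≠ 0 := by
          rw [hAe]
          exact mul_ne_zero (by positivity) hz
        nlinarith [sq_nonneg (A + 2 * T), pow_pos (abs_pos.mpr hA0) 2, sq_abs A, sq_nonneg T]
      · nlinarith [sq_nonneg A, sq_nonneg (A + 2 * T), pow_pos (abs_pos.mpr hT0) 2, sq_abs T]
    nlinarith [mul_pos hk hpos]
end

section
/- Consider the system ρ̇ = −v·cos γ, δ̇ = v·sin γ/ρ, γ̇ = v·sin γ/ρ − ω on ρ > 0 with constant v > 0 and ω = (v/ρ)·(sin γ + cos³γ·ω̄), ω̄ = c₁·tan γ + c₂·ζ, ζ = tan γ + c₁·δ. Then along solutions (with |γ| < π/2): ζ̇ = −(v·cos γ/ρ)·c₂·ζ and d(tan γ)/dt = −(v·cos γ/ρ)·(c₁·tan γ + c₂·ζ). -/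
open Real

theorem Dubins_forwarding_closed_loop (v c₁ c₂ : ℝ) (hv : 0 < v) (hc₁ : 0 < c₁) (hc₂ : 0 < c₂)
    (ρ δ γ ω : ℝ → ℝ) (t : ℝ)
    (hρ_pos : 0 < ρ t)
    (hγ_range : |γ t| < Real.pi / 2)
    (hρ : HasDerivAt ρ (-(v * Real.cos (γ t))) t)
    (hδ : HasDerivAt δ (v * Real.sin (γ t) / ρ t) t)
    (hγ : HasDerivAt γ (v * Real.sin (γ t) / ρ t - ω t) t)
    (hω : ω t = (v / ρ t) * (Real.sin (γ t) + Real.cos (γ t) ^ 3 *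
      (c₁ * Real.tan (γ t) + c₂ * (Real.tan (γ t) + c₁ * δ t)))) :
    HasDerivAt (fun s => Real.tan (γ s) + c₁ * δ s)
      (-(v * Real.cos (γ t) / ρ t) * c₂ * (Real.tan (γ t) + c₁ * δ t)) t ∧
    HasDerivAt (fun s => Real.tan (γ s))
      (-(v * Real.cos (γ t) / ρ t) *
        (c₁ * Real.tan (γ t) + c₂ * (Real.tan (γ t) + c₁ * δ t))) t := by
  have habs := abs_lt.mp hγ_range
  have hcos : 0 < Real.cos (γ t) :=
    Real.cos_pos_of_mem_Ioo ⟨by linarith [habs.1], habs.2⟩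
  have hcne : Real.cos (γ t) ≠ 0 := ne_of_gt hcos
  have hρne : ρ t ≠ 0 := ne_of_gt hρ_pos
  have htan0 : HasDerivAt (fun s => Real.tan (γ s))
      (1 / Real.cos (γ t) ^ 2 * (v * Real.sin (γ t) / ρ t - ω t)) t :=
    (Real.hasDerivAt_tan hcne).comp t hγ
  have htan : HasDerivAt (fun s => Real.tan (γ s))
      (-(v * Real.cos (γ t) / ρ t) *
        (c₁ * Real.tan (γ t) + c₂ * (Real.tan (γ t) + c₁ * δ t))) t := by
    convert htan0 using 1
    rw [hω, Real.tan_eq_sin_div_cos]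
    field_simp
    ring
  refine ⟨?_, htan⟩
  have hζ := htan.add ((hδ.const_mul c₁))
  refine hζ.congr_deriv ?_
  rw [Real.tan_eq_sin_div_cos]
  field_simp
  ring
end

section
/- Let c₁, c₂ > 0 and c̲ = min{c₁, c₂}. Suppose ζ, Γ : (0, ρ₀] → ℝ satisfy dζ/dρ = (c₂/ρ²)·ζ and dΓ/dρ = (1/ρ²)·(c₁Γ + c₂ζ). Then the function V(ρ) = (c₂/c₁)·ζ(ρ)² + Γ(ρ)² satisfies dV/dρ = (1/(c₁ρ²))·[(c₂ζ)² + (c₁Γ)² + (c₂ζ + c₁Γ)²] ≥ (c̲/ρ²)·V(ρ), and consequently V(ρ) ≤ V(ρ₀)·exp(c̲·(1/ρ₀ − 1/ρ)) for all ρ ∈ (0, ρ₀]. -/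
open Real Set

theorem forwarding_Lyapunov_exp_bound (c₁ c₂ ρ₀ : ℝ) (hc₁ : 0 < c₁) (hc₂ : 0 < c₂)
    (hρ₀ : 0 < ρ₀)
    (ζ Γ : ℝ → ℝ)
    (hζ : ∀ ρ ∈ Ioc 0 ρ₀, HasDerivAt ζ ((c₂ / ρ ^ 2) * ζ ρ) ρ)
    (hΓ : ∀ ρ ∈ Ioc 0 ρ₀, HasDerivAt Γ ((1 / ρ ^ 2) * (c₁ * Γ ρ + c₂ * ζ ρ)) ρ) :
    (∀ ρ ∈ Ioc 0 ρ₀,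
      HasDerivAt (fun r => (c₂ / c₁) * ζ r ^ 2 + Γ r ^ 2)
        ((1 / (c₁ * ρ ^ 2)) * ((c₂ * ζ ρ) ^ 2 + (c₁ * Γ ρ) ^ 2 +
          (c₂ * ζ ρ + c₁ * Γ ρ) ^ 2)) ρ ∧
      (min c₁ c₂ / ρ ^ 2) * ((c₂ / c₁) * ζ ρ ^ 2 + Γ ρ ^ 2) ≤
        (1 / (c₁ * ρ ^ 2)) * ((c₂ * ζ ρ) ^ 2 + (c₁ * Γ ρ) ^ 2 +
          (c₂ * ζ ρ + c₁ * Γ ρ) ^ 2)) ∧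
    (∀ ρ ∈ Ioc 0 ρ₀,
      (c₂ / c₁) * ζ ρ ^ 2 + Γ ρ ^ 2 ≤
        ((c₂ / c₁) * ζ ρ₀ ^ 2 + Γ ρ₀ ^ 2) *
          Real.exp (min c₁ c₂ * (1 / ρ₀ - 1 / ρ))) := by
  set m := min c₁ c₂ with hm
  have hm0 : 0 < m := lt_min hc₁ hc₂
  have key : ∀ ρ ∈ Ioc 0 ρ₀, HasDerivAt (fun r => (c₂ / c₁) * ζ r ^ 2 + Γ r ^ 2)
      ((1 / (c₁ * ρ ^ 2)) * ((c₂ * ζ ρ) ^ 2 + (c₁ * Γ ρ) ^ 2 +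
        (c₂ * ζ ρ + c₁ * Γ ρ) ^ 2)) ρ := by
    intro ρ hρ
    have hρ0 : ρ ≠ 0 := ne_of_gt hρ.1
    have h1 := (((hζ ρ hρ).pow 2)).const_mul (c₂ / c₁)
    have h2 := (hΓ ρ hρ).pow 2
    have h3 := h1.add h2
    refine h3.congr_deriv ?_
    field_simp
    ring
  have ineq : ∀ ρ ∈ Ioc 0 ρ₀,
      (m / ρ ^ 2) * ((c₂ / c₁) * ζ ρ ^ 2 + Γ ρ ^ 2) ≤
        (1 / (c₁ * ρ ^ 2)) * ((c₂ * ζ ρ) ^ 2 + (c₁ * Γ ρ) ^ 2 +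
          (c₂ * ζ ρ + c₁ * Γ ρ) ^ 2) := by
    intro ρ hρ
    have hρ0 : ρ ≠ 0 := ne_of_gt hρ.1
    have key2 : m * (c₂ * ζ ρ ^ 2 + c₁ * Γ ρ ^ 2) ≤
        (c₂ * ζ ρ) ^ 2 + (c₁ * Γ ρ) ^ 2 + (c₂ * ζ ρ + c₁ * Γ ρ) ^ 2 := by
      nlinarith [min_le_left c₁ c₂, min_le_right c₁ c₂, sq_nonneg (ζ ρ), sq_nonneg (Γ ρ),
        sq_nonneg (c₂ * ζ ρ + c₁ * Γ ρ), mul_nonneg (sub_nonneg.2 (min_le_right c₁ c₂)) (sq_nonneg (ζ ρ)),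
        mul_nonneg (sub_nonneg.2 (min_le_left c₁ c₂)) (sq_nonneg (Γ ρ))]
    calc (m / ρ ^ 2) * ((c₂ / c₁) * ζ ρ ^ 2 + Γ ρ ^ 2)
        = (1 / (c₁ * ρ ^ 2)) * (m * (c₂ * ζ ρ ^ 2 + c₁ * Γ ρ ^ 2)) := by
          field_simp
      _ ≤ (1 / (c₁ * ρ ^ 2)) * ((c₂ * ζ ρ) ^ 2 + (c₁ * Γ ρ) ^ 2 +
          (c₂ * ζ ρ + c₁ * Γ ρ) ^ 2) :=
          mul_le_mul_of_nonneg_left key2 (by positivity)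
  refine ⟨fun ρ hρ => ⟨key ρ hρ, ineq ρ hρ⟩, ?_⟩
  -- comparison part
  set V : ℝ → ℝ := fun r => (c₂ / c₁) * ζ r ^ 2 + Γ r ^ 2 with hV
  set W : ℝ → ℝ := fun r => V r * Real.exp (m / r) with hW
  have hWderiv : ∀ ρ ∈ Ioc 0 ρ₀, HasDerivAt W
      (((1 / (c₁ * ρ ^ 2)) * ((c₂ * ζ ρ) ^ 2 + (c₁ * Γ ρ) ^ 2 +
        (c₂ * ζ ρ + c₁ * Γ ρ) ^ 2) - (m / ρ ^ 2) * V ρ) * Real.exp (m / ρ)) ρ := by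
    intro ρ hρ
    have hρ0 : ρ ≠ 0 := ne_of_gt hρ.1
    have hinv : HasDerivAt (fun r : ℝ => m / r) (-(m / ρ ^ 2)) ρ := by
      have := (hasDerivAt_inv hρ0).const_mul m
      simpa [div_eq_mul_inv, neg_div, mul_div_assoc] using this
    have hexp : HasDerivAt (fun r : ℝ => Real.exp (m / r))
        (Real.exp (m / ρ) * (-(m / ρ ^ 2))) ρ := hinv.exp
    have := (key ρ hρ).mul hexp
    refine this.congr_deriv ?_
    ring
  have hWnonneg : ∀ x ∈ Ioo 0 ρ₀, 0 ≤ deriv W x := by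
    intro x hx
    have hx' : x ∈ Ioc 0 ρ₀ := Ioo_subset_Ioc_self hx
    rw [(hWderiv x hx').deriv]
    exact mul_nonneg (sub_nonneg.2 (ineq x hx')) (Real.exp_pos _).le
  have hmono : MonotoneOn W (Ioc 0 ρ₀) := by
    apply monotoneOn_of_deriv_nonneg (convex_Ioc 0 ρ₀)
    · intro x hx
      exact (hWderiv x hx).continuousAt.continuousWithinAt
    · rw [interior_Ioc]
      intro x hx
      exact ((hWderiv x (Ioo_subset_Ioc_self hx)).differentiableAt).differentiableWithinAt
    · rw [interior_Ioc]
      exact hWnonneg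
  intro ρ hρ
  have hρ0 : ρ ≠ 0 := ne_of_gt hρ.1
  have hρ₀0 : ρ₀ ≠ 0 := ne_of_gt hρ₀
  have hle : W ρ ≤ W ρ₀ := hmono hρ ⟨hρ₀, le_refl _⟩ hρ.2
  have h2 := mul_le_mul_of_nonneg_right hle (Real.exp_pos (-(m / ρ))).le
  have hWρ : W ρ * Real.exp (-(m / ρ)) = V ρ := by
    rw [hW]
    simp only
    rw [mul_assoc, ← Real.exp_add]
    simp
  have hWρ₀ : W ρ₀ * Real.exp (-(m / ρ)) = V ρ₀ * Real.exp (m * (1 / ρ₀ - 1 / ρ)) := by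
    rw [hW]
    simp only
    rw [mul_assoc, ← Real.exp_add]
    congr 2
    field_simp
    ring
  rw [hWρ, hWρ₀] at h2
  exact h2
end

section
/- Let c₁, c₂ > 0 with c̲ = min{c₁, c₂}. Suppose ζ, τ : (0, ρ₀] → ℝ satisfy dζ/dρ = (c₂/ρ)·ζ·(cos γ factor normalized to 1), i.e., along the reparametrized flow dζ/dρ = (c₂/ρ)·ζ and dτ/dρ = (1/ρ)·(c₁τ + c₂ζ). Then V(ρ) = (c₂/c₁)·ζ² + τ² satisfies dV/dρ = (1/(c₁ρ))·[(c₂ζ)² + (c₁τ)² + (c₂ζ + c₁τ)²] ≥ (c̲/ρ)·V, hence V(ρ) ≤ V(ρ₀)·(ρ/ρ₀)^{c̲} for all ρ ∈ (0, ρ₀]. -/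
open Real Set

theorem forwarding_Lyapunov_power_bound (c₁ c₂ ρ₀ : ℝ) (hc₁ : 0 < c₁) (hc₂ : 0 < c₂)
    (hρ₀ : 0 < ρ₀)
    (ζ τ : ℝ → ℝ)
    (hζ : ∀ ρ ∈ Ioc 0 ρ₀, HasDerivAt ζ ((c₂ / ρ) * ζ ρ) ρ)
    (hτ : ∀ ρ ∈ Ioc 0 ρ₀, HasDerivAt τ ((1 / ρ) * (c₁ * τ ρ + c₂ * ζ ρ)) ρ) :
    (∀ ρ ∈ Ioc 0 ρ₀,
      HasDerivAt (fun r => (c₂ / c₁) * ζ r ^ 2 + τ r ^ 2)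
        ((1 / (c₁ * ρ)) * ((c₂ * ζ ρ) ^ 2 + (c₁ * τ ρ) ^ 2 +
          (c₂ * ζ ρ + c₁ * τ ρ) ^ 2)) ρ ∧
      (min c₁ c₂ / ρ) * ((c₂ / c₁) * ζ ρ ^ 2 + τ ρ ^ 2) ≤
        (1 / (c₁ * ρ)) * ((c₂ * ζ ρ) ^ 2 + (c₁ * τ ρ) ^ 2 +
          (c₂ * ζ ρ + c₁ * τ ρ) ^ 2)) ∧
    (∀ ρ ∈ Ioc 0 ρ₀,
      (c₂ / c₁) * ζ ρ ^ 2 + τ ρ ^ 2 ≤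
        ((c₂ / c₁) * ζ ρ₀ ^ 2 + τ ρ₀ ^ 2) * (ρ / ρ₀) ^ (min c₁ c₂)) := by
  set c := min c₁ c₂ with hc
  set V : ℝ → ℝ := fun r => (c₂ / c₁) * ζ r ^ 2 + τ r ^ 2 with hV
  -- derivative of V
  have hVder : ∀ ρ ∈ Ioc 0 ρ₀, HasDerivAt V
      ((1 / (c₁ * ρ)) * ((c₂ * ζ ρ) ^ 2 + (c₁ * τ ρ) ^ 2 +
        (c₂ * ζ ρ + c₁ * τ ρ) ^ 2)) ρ := by
    intro ρ hρ
    have hρ0 : (0:ℝ) < ρ := hρ.1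
    have h1 := ((hζ ρ hρ).pow 2).const_mul (c₂ / c₁)
    have h2 := (hτ ρ hρ).pow 2
    have := h1.add h2
    refine this.congr_deriv ?_
    field_simp
    ring
  have hineq : ∀ ρ ∈ Ioc 0 ρ₀,
      (c / ρ) * V ρ ≤ (1 / (c₁ * ρ)) * ((c₂ * ζ ρ) ^ 2 + (c₁ * τ ρ) ^ 2 +
        (c₂ * ζ ρ + c₁ * τ ρ) ^ 2) := by
    intro ρ hρ
    have hρ0 : (0:ℝ) < ρ := hρ.1
    have hle1 : c ≤ c₁ := min_le_left _ _
    have hle2 : c ≤ c₂ := min_le_right _ _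
    have hc0 : 0 < c := lt_min hc₁ hc₂
    rw [div_mul_eq_mul_div, one_div, ← div_eq_inv_mul, div_le_div_iff₀ hρ0 (by positivity)]
    have hVρ : V ρ = (c₂ / c₁) * ζ ρ ^ 2 + τ ρ ^ 2 := rfl
    rw [hVρ]
    have key : c * ((c₂ / c₁) * ζ ρ ^ 2 + τ ρ ^ 2) * c₁ ≤
        (c₂ * ζ ρ) ^ 2 + (c₁ * τ ρ) ^ 2 + (c₂ * ζ ρ + c₁ * τ ρ) ^ 2 := by
      have h : c * ((c₂ / c₁) * ζ ρ ^ 2 + τ ρ ^ 2) * c₁ = c * c₂ * ζ ρ ^ 2 + c * c₁ * τ ρ ^ 2 := by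
        field_simp
      rw [h]
      nlinarith [sq_nonneg (c₂ * ζ ρ + c₁ * τ ρ), sq_nonneg (ζ ρ), sq_nonneg (τ ρ),
        mul_le_mul_of_nonneg_right (mul_le_mul_of_nonneg_right hle2 hc₂.le) (sq_nonneg (ζ ρ)),
        mul_le_mul_of_nonneg_right (mul_le_mul_of_nonneg_right hle1 hc₁.le) (sq_nonneg (τ ρ))]
    calc c * ((c₂ / c₁) * ζ ρ ^ 2 + τ ρ ^ 2) * (c₁ * ρ)
        = c * ((c₂ / c₁) * ζ ρ ^ 2 + τ ρ ^ 2) * c₁ * ρ := by ring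
      _ ≤ ((c₂ * ζ ρ) ^ 2 + (c₁ * τ ρ) ^ 2 + (c₂ * ζ ρ + c₁ * τ ρ) ^ 2) * ρ :=
          mul_le_mul_of_nonneg_right key hρ0.le
  refine ⟨fun ρ hρ => ⟨hVder ρ hρ, hineq ρ hρ⟩, ?_⟩
  -- Gronwall-type comparison via monotonicity of W = V * r ^ (-c)
  intro ρ hρ
  have hρpos : (0:ℝ) < ρ := hρ.1
  have hρle : ρ ≤ ρ₀ := hρ.2
  have hc0 : 0 < c := lt_min hc₁ hc₂
  set W : ℝ → ℝ := fun r => V r * r ^ (-c) with hW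
  have hWder : ∀ x ∈ Ioc 0 ρ₀, HasDerivAt W
      (((1 / (c₁ * x)) * ((c₂ * ζ x) ^ 2 + (c₁ * τ x) ^ 2 + (c₂ * ζ x + c₁ * τ x) ^ 2)
        - (c / x) * V x) * x ^ (-c)) x := by
    intro x hx
    have hx0 : (0:ℝ) < x := hx.1
    have hg : HasDerivAt (fun r : ℝ => r ^ (-c)) (-c * x ^ (-c - 1)) x :=
      Real.hasDerivAt_rpow_const (Or.inl hx0.ne')
    have := (hVder x hx).mul hg
    refine this.congr_deriv ?_
    have hx1 : x ^ (-c - 1) = x ^ (-c) / x := by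
      rw [Real.rpow_sub hx0, Real.rpow_one]
    rw [hx1]
    field_simp
    ring
  have hWmono : MonotoneOn W (Icc ρ ρ₀) := by
    have hsub : Icc ρ ρ₀ ⊆ Ioc 0 ρ₀ := fun x hx => ⟨lt_of_lt_of_le hρpos hx.1, hx.2⟩
    apply monotoneOn_of_deriv_nonneg (convex_Icc _ _)
    · exact fun x hx => ((hWder x (hsub hx)).continuousAt).continuousWithinAt
    · intro x hx
      have hx' : x ∈ Ioc 0 ρ₀ := hsub (interior_subset hx)
      exact ((hWder x hx').differentiableAt).differentiableWithinAt
    · intro x hx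
      have hx' : x ∈ Ioc 0 ρ₀ := hsub (interior_subset hx)
      rw [(hWder x hx').deriv]
      have hx0 : (0:ℝ) < x := hx'.1
      have h1 := hineq x hx'
      have h2 : (0:ℝ) ≤ x ^ (-c) := (Real.rpow_pos_of_pos hx0 _).le
      nlinarith
  have hWle : W ρ ≤ W ρ₀ := hWmono ⟨le_refl ρ, hρle⟩ ⟨hρle, le_refl ρ₀⟩ hρle
  have hρc : (0:ℝ) < ρ ^ c := Real.rpow_pos_of_pos hρpos _
  have hρ₀c : (0:ℝ) < ρ₀ ^ c := Real.rpow_pos_of_pos hρ₀ _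
  have hdiv : (ρ / ρ₀) ^ c = ρ ^ c / ρ₀ ^ c := Real.div_rpow hρpos.le hρ₀.le _
  have hWρ : W ρ = V ρ / ρ ^ c := by
    rw [hW]; simp only []; rw [Real.rpow_neg hρpos.le]; ring
  have hWρ₀ : W ρ₀ = V ρ₀ / ρ₀ ^ c := by
    rw [hW]; simp only []; rw [Real.rpow_neg hρ₀.le]; ring
  rw [hWρ, hWρ₀, div_le_div_iff₀ hρc hρ₀c] at hWle
  show V ρ ≤ V ρ₀ * (ρ / ρ₀) ^ c
  rw [hdiv, ← mul_div_assoc, le_div_iff₀ hρ₀c]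
  linarith [hWle]
end
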